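/- Let n > e^5, let 1 < k < √n, let λ ⊢ n with Frobenius coordinates (a₁,...,a_m | b₁,...,b_m) and associated multiset 𝒫 = {a_j − k/2} ∪ {k/2 − b_j}. Then for every real x with |x| > k·√n·log n there exists a real y with |y − x| < √n such that ∑_{p ∈ 𝒫 : |p−x| < |x|/2} 1/|p − y| ≤ 4·√n·(log n)/|x| (that is, y is 4√n·log n-well-spaced for x with respect to 𝒫). -/

import Mathlib

/-- The `i`-th part of a partition (0-indexed, parts in decreasing order, `0` beyond the
number of parts). -/
def partNth (n : ℕ) (l : Nat.Partition n) (i : ℕ) : ℕ :=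
  ((l.parts.sort (· ≤ ·)).reverse.getD i 0)

/-- Diagonal length `m` of the partition: the number of `i` (0-indexed) with `λ_{i+1} ≥ i+1`. -/
def diagLen (n : ℕ) (l : Nat.Partition n) : ℕ :=
  ((Finset.range n).filter (fun i => i < partNth n l i)).card

/-- Number of parts of the conjugate partition `λ'` at 0-indexed position `i`, i.e.
`λ'_{i+1} = #{j : λ_j ≥ i+1}`. -/
def conjNth (n : ℕ) (l : Nat.Partition n) (i : ℕ) : ℕ :=
  ((Finset.range n).filter (fun j => i < partNth n l j)).card

/-- Frobenius coordinate `a_i = λ_i − i + 1/2` (1-indexed; here `i : ℕ` is 0-indexed). -/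
noncomputable def fA (n : ℕ) (l : Nat.Partition n) (i : ℕ) : ℝ :=
  (partNth n l i : ℝ) - i - 1/2

/-- Frobenius coordinate `b_i = λ′_i − i + 1/2` (1-indexed; here `i : ℕ` is 0-indexed). -/
noncomputable def fB (n : ℕ) (l : Nat.Partition n) (i : ℕ) : ℝ :=
  (conjNth n l i : ℝ) - i - 1/2

/-- The falling factorial `x^{k↓} = x(x−1)⋯(x−k+1)`. -/
noncomputable def fall (x : ℝ) (k : ℕ) : ℝ := ∏ i ∈ Finset.range k, (x - i)

/-- The multiset `𝒫 = {a_j − k/2 : 1 ≤ j ≤ m} ∪ {k/2 − b_j : 1 ≤ j ≤ m}` of poles. -/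
noncomputable def poleSet (n : ℕ) (l : Nat.Partition n) (k : ℕ) : Multiset ℝ :=
  ((Finset.range (diagLen n l)).val.map (fun j => fA n l j - (k : ℝ)/2)) +
    ((Finset.range (diagLen n l)).val.map (fun j => (k : ℝ)/2 - fB n l j))

/-!
All poles lie on `k/2 + 1/2 + ℤ`, so the points of `k/2 + ℤ` keep distance at least `1/2` from
them. Take the `M ≈ 2√n` points of `k/2 + ℤ` within `√n` of `x`: a single pole sees them at
distances `j + 1/2`, each value at most twice, so its reciprocal distances to them add up to at
most `2 ∑_{j<M} 1/(j + 1/2) ≤ 8 + log n`. The poles within `|x|/2` of `x` have the sign of `x`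
and come from rows (or, for `x < 0`, columns) of length at least `|x|/2`; as these lengths add
up to at most `n`, there are at most `2n/|x|` such poles. Averaging over the `M` candidates gives
a point whose sum is at most `(2n/|x|)(8 + log n)/(2√n - 1) ≤ 4√n log n/|x|`.
-/

open Finset

lemma List.sum_range_getD_eq_sum (L : List ℕ) {n : ℕ} (h : L.length ≤ n) :
    ∑ i ∈ Finset.range n, L.getD i 0 = L.sum := by
  induction L generalizing n with
  | nil => simp
  | cons a L ih =>
    obtain ⟨n, rfl⟩ : ∃ n', n = n' + 1 := Nat.exists_eq_add_one.2 (by simp at h; omega)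
    simp only [Finset.sum_range_succ', List.getD_cons_succ, List.getD_cons_zero, List.sum_cons]
    rw [ih (by simpa using h), add_comm]

section Partition

variable {n : ℕ} (l : Nat.Partition n)

lemma length_sorted_parts_le : (l.parts.sort (· ≤ ·)).reverse.length ≤ n := by
  rw [List.length_reverse, Multiset.length_sort]
  simpa [l.parts_sum] using Multiset.card_nsmul_le_sum fun _ hi => l.parts_pos hi

lemma sum_partNth : ∑ i ∈ range n, partNth n l i = n := by
  simp only [partNth]
  rw [List.sum_range_getD_eq_sum _ (length_sorted_parts_le l), List.sum_reverse,
    ← Multiset.sum_coe, Multiset.sort_eq, l.parts_sum]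

lemma partNth_le (i : ℕ) : partNth n l i ≤ n := by
  rw [partNth, List.getD_eq_getElem?_getD]
  cases h : (l.parts.sort (· ≤ ·)).reverse[i]? with
  | none => simp
  | some a =>
    have ha := List.mem_of_getElem? h
    rw [List.mem_reverse, Multiset.mem_sort] at ha
    exact l.le_of_mem_parts ha

lemma partNth_antitone : Antitone (partNth n l) := by
  intro i j hij
  have hsorted : (l.parts.sort (· ≤ ·)).reverse.SortedGE :=
    (Multiset.pairwise_sort _ _).sortedLE.reverse
  simp only [partNth]
  by_cases hj : j < (l.parts.sort (· ≤ ·)).reverse.length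
  · rw [List.getD_eq_getElem _ _ hj, List.getD_eq_getElem _ _ (hij.trans_lt hj)]
    exact hsorted.getElem_ge_getElem_of_le hij
  · rw [List.getD_eq_default _ _ (not_lt.1 hj)]
    exact Nat.zero_le _

lemma lt_partNth_of_lt_diagLen {j : ℕ} (hj : j < diagLen n l) : j < partNth n l j := by
  by_contra! h
  have hsub : (range n).filter (fun i => i < partNth n l i) ⊆ range j := by
    intro i hi
    rw [mem_filter] at hi
    by_contra! hji
    rw [mem_range, not_lt] at hji
    have := partNth_antitone l hji
    omega
  simpa [diagLen] using (card_le_card hsub).trans_lt' hj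

lemma diagLen_le : diagLen n l ≤ n :=
  (card_filter_le _ _).trans (card_range n).le

lemma lt_conjNth_of_lt_diagLen {j : ℕ} (hj : j < diagLen n l) : j < conjNth n l j := by
  have hsub : range (j + 1) ⊆ (range n).filter (fun i => j < partNth n l i) := by
    intro i hi
    rw [mem_range] at hi
    have := partNth_antitone l (Nat.lt_succ_iff.1 hi)
    have := lt_partNth_of_lt_diagLen l hj
    have := diagLen_le l
    simp only [mem_filter, mem_range]
    omega
  simpa [conjNth] using card_le_card hsub

lemma sum_conjNth : ∑ j ∈ range n, conjNth n l j = n := by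
  simp only [conjNth, card_filter]
  rw [sum_comm]
  conv_rhs => rw [← sum_partNth l]
  refine sum_congr rfl fun i _ => ?_
  rw [← card_filter]
  convert card_range (partNth n l i) using 2
  ext j
  have := partNth_le l i
  simp only [mem_filter, mem_range]
  omega

end Partition

lemma card_filter_map_mul_le_sum {ι α : Type*} (s : Finset ι) (g : ι → α) (F : ι → ℝ)
    (P : α → Prop) [DecidablePred P] (c : ℝ) (hF₀ : ∀ j ∈ s, 0 ≤ F j)
    (hF : ∀ j ∈ s, P (g j) → c ≤ F j) :
    (Multiset.card ((s.val.map g).filter P) : ℝ) * c ≤ ∑ j ∈ s, F j := by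
  rw [Multiset.filter_map, Multiset.card_map, ← Finset.filter_val, ← Finset.card_def,
    ← nsmul_eq_mul]
  calc #(s.filter (P ∘ g)) • c ≤ ∑ j ∈ s.filter (P ∘ g), F j :=
        card_nsmul_le_sum _ _ _ fun j hj => hF j (mem_filter.1 hj).1 (mem_filter.1 hj).2
    _ ≤ ∑ j ∈ s, F j := sum_le_sum_of_subset_of_nonneg (filter_subset _ _)
        fun j hj _ => hF₀ j hj

section Poles

variable {n : ℕ} (l : Nat.Partition n)

lemma half_le_fA {j : ℕ} (hj : j < diagLen n l) : 1 / 2 ≤ fA n l j := by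
  have : (j : ℝ) + 1 ≤ partNth n l j := by exact_mod_cast lt_partNth_of_lt_diagLen l hj
  rw [fA]
  linarith

lemma half_le_fB {j : ℕ} (hj : j < diagLen n l) : 1 / 2 ≤ fB n l j := by
  have : (j : ℝ) + 1 ≤ conjNth n l j := by exact_mod_cast lt_conjNth_of_lt_diagLen l hj
  rw [fB]
  linarith

lemma fA_le_partNth (j : ℕ) : fA n l j ≤ partNth n l j := by
  rw [fA]
  linarith [(Nat.cast_nonneg j : (0 : ℝ) ≤ j)]

lemma fB_le_conjNth (j : ℕ) : fB n l j ≤ conjNth n l j := by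
  rw [fB]
  linarith [(Nat.cast_nonneg j : (0 : ℝ) ≤ j)]

lemma sum_partNth_diagLen_le : ∑ j ∈ range (diagLen n l), (partNth n l j : ℝ) ≤ n := by
  exact_mod_cast (sum_le_sum_of_subset (range_subset_range.2 (diagLen_le l))).trans
    (sum_partNth l).le

lemma sum_conjNth_diagLen_le : ∑ j ∈ range (diagLen n l), (conjNth n l j : ℝ) ≤ n := by
  exact_mod_cast (sum_le_sum_of_subset (range_subset_range.2 (diagLen_le l))).trans
    (sum_conjNth l).le

lemma exists_eq_add_int_of_mem_poleSet {k : ℕ} {p : ℝ} (hp : p ∈ poleSet n l k) :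
    ∃ q : ℤ, p = k / 2 + 1 / 2 + q := by
  rcases Multiset.mem_add.1 hp with hp | hp <;> obtain ⟨j, -, rfl⟩ := Multiset.mem_map.1 hp
  · exact ⟨(partNth n l j : ℤ) - j - k - 1, by rw [fA]; push_cast; ring⟩
  · exact ⟨(j : ℤ) - conjNth n l j, by rw [fB]; push_cast; ring⟩

/-- Poles near `x` have the sign of `x`, and each one comes from a row (or column) of length
at least `|x| / 2`. -/
lemma card_filter_poleSet_mul_le (k : ℕ) {x : ℝ} (hkx : (k : ℝ) < |x| + 1) :
    (Multiset.card ((poleSet n l k).filter (fun p => |p - x| < |x| / 2)) : ℝ) * (|x| / 2)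
      ≤ n := by
  rw [poleSet, Multiset.filter_add, Multiset.card_add, Nat.cast_add, add_mul]
  rcases le_or_gt 0 x with hx | hx
  · rw [abs_of_nonneg hx] at hkx ⊢
    have hB : ((range (diagLen n l)).val.map (fun j => (k : ℝ) / 2 - fB n l j)).filter
        (fun p => |p - x| < x / 2) = 0 := by
      refine Multiset.filter_eq_nil.2 fun p hp hpx => ?_
      obtain ⟨j, hj, rfl⟩ := Multiset.mem_map.1 hp
      linarith [half_le_fB l (mem_range.1 hj), (abs_lt.1 hpx).1]
    rw [hB, Multiset.card_zero, Nat.cast_zero, zero_mul, add_zero]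
    refine (card_filter_map_mul_le_sum _ _ _ _ _ (fun j _ => by positivity)
      fun j _ hj => ?_).trans (sum_partNth_diagLen_le l)
    linarith [fA_le_partNth l j, (abs_lt.1 hj).1]
  · rw [abs_of_neg hx] at hkx ⊢
    have hA : ((range (diagLen n l)).val.map (fun j => fA n l j - (k : ℝ) / 2)).filter
        (fun p => |p - x| < -x / 2) = 0 := by
      refine Multiset.filter_eq_nil.2 fun p hp hpx => ?_
      obtain ⟨j, hj, rfl⟩ := Multiset.mem_map.1 hp
      linarith [half_le_fA l (mem_range.1 hj), (abs_lt.1 hpx).2]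
    rw [hA, Multiset.card_zero, Nat.cast_zero, zero_mul, zero_add]
    refine (card_filter_map_mul_le_sum _ _ _ _ _ (fun j _ => by positivity)
      fun j _ hj => ?_).trans (sum_conjNth_diagLen_le l)
    linarith [fB_le_conjNth l j, (abs_lt.1 hj).2]

end Poles

/-- The sum of the reciprocal distances from an integer to the `M` nearest points of `ℤ + 1/2`
on one side of it. -/
noncomputable def halfHarmonic (M : ℕ) : ℝ := ∑ j ∈ range M, 1 / ((j : ℝ) + 1 / 2)

lemma halfHarmonic_le_succ (M : ℕ) : halfHarmonic M ≤ halfHarmonic (M + 1) := by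
  rw [halfHarmonic, halfHarmonic, sum_range_succ]
  exact le_add_of_nonneg_right (by positivity)

lemma halfHarmonic_succ_le (M : ℕ) : halfHarmonic (M + 1) ≤ 2 + Real.log (2 * M + 1) := by
  induction M with
  | zero => norm_num [halfHarmonic]
  | succ M ih =>
    have h₁ : (0 : ℝ) < 2 * M + 1 := by positivity
    have h₃ : (0 : ℝ) < 2 * (M + 1) + 1 := by positivity
    have hstep : 1 / ((M : ℝ) + 1 + 1 / 2) ≤
        Real.log (2 * (M + 1) + 1) - Real.log (2 * M + 1) := by
      rw [← Real.log_div h₃.ne' h₁.ne']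
      refine le_trans (le_of_eq ?_) (Real.one_sub_inv_le_log_of_pos (div_pos h₃ h₁))
      field_simp
      ring
    rw [halfHarmonic, sum_range_succ, ← halfHarmonic]
    push_cast
    linarith

lemma halfHarmonic_le (M : ℕ) : halfHarmonic M ≤ 2 + Real.log (2 * M + 1) :=
  (halfHarmonic_le_succ M).trans (halfHarmonic_succ_le M)

noncomputable def halfInvPos (t : ℤ) : ℝ := if 0 ≤ t then 1 / ((t : ℝ) + 1 / 2) else 0

lemma one_div_abs_int_add_half (t : ℤ) :
    1 / |(t : ℝ) + 1 / 2| = halfInvPos t + halfInvPos (-1 - t) := by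
  rcases le_or_gt 0 t with ht | ht
  · have : (0 : ℝ) ≤ t := by exact_mod_cast ht
    rw [halfInvPos, halfInvPos, if_pos ht, if_neg (by omega), abs_of_pos (by linarith), add_zero]
  · have : (t : ℝ) ≤ -1 := by exact_mod_cast Int.le_sub_one_of_lt ht
    rw [halfInvPos, halfInvPos, if_neg (by omega), if_pos (by omega), abs_of_neg (by linarith),
      zero_add]
    push_cast
    ring_nf

lemma sum_range_halfInvPos_le (b : ℤ) (M : ℕ) :
    ∑ i ∈ range M, halfInvPos (b + i) ≤ halfHarmonic M := by
  induction M generalizing b with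
  | zero => simp [halfHarmonic]
  | succ M ih =>
    by_cases hb : 0 ≤ b
    · refine sum_le_sum fun i _ => ?_
      have : (0 : ℝ) ≤ b := by exact_mod_cast hb
      rw [halfInvPos, if_pos (by omega)]
      push_cast
      gcongr
      linarith
    · rw [sum_range_succ', halfInvPos, Nat.cast_zero, add_zero, if_neg hb, add_zero]
      calc ∑ i ∈ range M, halfInvPos (b + (i + 1 : ℕ))
          = ∑ i ∈ range M, halfInvPos (b + 1 + i) := by
            refine sum_congr rfl fun i _ => ?_
            push_cast
            ring_nf
        _ ≤ halfHarmonic M := ih (b + 1)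
        _ ≤ halfHarmonic (M + 1) := halfHarmonic_le_succ M

lemma sum_range_one_div_abs_int_add_half_sub_le (c : ℤ) (M : ℕ) :
    ∑ i ∈ range M, 1 / |(c : ℝ) + 1 / 2 - i| ≤ 2 * halfHarmonic M := by
  have hsplit : ∀ i : ℕ,
      1 / |(c : ℝ) + 1 / 2 - i| = halfInvPos (c - i) + halfInvPos (-1 - c + i) := by
    intro i
    rw [show (c : ℝ) + 1 / 2 - i = ((c - i : ℤ) : ℝ) + 1 / 2 by push_cast; ring,
      one_div_abs_int_add_half]
    congr 2
    ring
  have hreflect :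
      ∑ i ∈ range M, halfInvPos (c - i) = ∑ i ∈ range M, halfInvPos (c - M + 1 + i) := by
    rw [← sum_range_reflect]
    refine sum_congr rfl fun i hi => ?_
    have := mem_range.1 hi
    congr 1
    omega
  rw [sum_congr rfl fun i _ => hsplit i, sum_add_distrib, hreflect, two_mul]
  exact add_le_add (sum_range_halfInvPos_le _ M) (sum_range_halfInvPos_le _ M)

section Averaging

variable {S : Multiset ℝ} {θ : ℝ}

/-- Each point of `S` contributes at most `2 * halfHarmonic M` in total over the `M` candidates
`θ + b + i`, so some candidate receives at most the average. -/
lemma exists_lt_sum_one_div_abs_sub_le (hS : ∀ p ∈ S, ∃ q : ℤ, p = θ + 1 / 2 + q) (b : ℤ)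
    {M : ℕ} (hM : 0 < M) :
    ∃ i < M, (S.map fun p => 1 / |p - (θ + b + i)|).sum
      ≤ Multiset.card S * (2 * halfHarmonic M) / M := by
  have hpole : ∀ p ∈ S, ∑ i ∈ range M, 1 / |p - (θ + b + i)| ≤ 2 * halfHarmonic M := by
    intro p hp
    obtain ⟨q, rfl⟩ := hS p hp
    convert sum_range_one_div_abs_int_add_half_sub_le (q - b) M using 4 with i
    push_cast
    ring
  have htotal : ∑ i ∈ range M, (S.map fun p => 1 / |p - (θ + b + i)|).sum
      ≤ ∑ _i ∈ range M, Multiset.card S * (2 * halfHarmonic M) / M := by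
    rw [sum_const, card_range, nsmul_eq_mul, mul_div_cancel₀ _ (by positivity),
      Finset.sum_eq_multiset_sum, Multiset.sum_map_sum_map, ← nsmul_eq_mul]
    refine (Multiset.sum_le_card_nsmul _ _ fun _ hc => ?_).trans_eq (by rw [Multiset.card_map])
    obtain ⟨p, hp, rfl⟩ := Multiset.mem_map.1 hc
    exact hpole p hp
  obtain ⟨i, hi, hle⟩ := exists_le_of_sum_le (nonempty_range_iff.2 hM.ne') htotal
  exact ⟨i, mem_range.1 hi, hle⟩

lemma exists_abs_sub_lt_sum_one_div_abs_sub_le (hS : ∀ p ∈ S, ∃ q : ℤ, p = θ + 1 / 2 + q)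
    (x : ℝ) {s : ℝ} {M : ℕ} (hM : 0 < M) (hMs : (M : ℝ) < 2 * s) :
    ∃ y, |y - x| < s ∧ (S.map fun p => 1 / |p - y|).sum
      ≤ Multiset.card S * (2 * halfHarmonic M) / M := by
  set b : ℤ := ⌊x - θ - s⌋ + 1
  have hb₁ : x - θ - s < b := by push_cast [b]; exact Int.lt_floor_add_one _
  have hb₂ : (b : ℝ) ≤ x - θ - s + 1 := by push_cast [b]; linarith [Int.floor_le (x - θ - s)]
  obtain ⟨i, hi, hsum⟩ := exists_lt_sum_one_div_abs_sub_le hS b hM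
  have hiM : (i : ℝ) + 1 ≤ M := by exact_mod_cast hi
  refine ⟨θ + b + i, abs_lt.2 ⟨?_, ?_⟩, hsum⟩ <;> linarith [(Nat.cast_nonneg i : (0 : ℝ) ≤ i)]

end Averaging

lemma two_mul_halfHarmonic_le {s : ℝ} (hs : 1 ≤ s) {M : ℕ} (hMs : (M : ℝ) < 2 * s) :
    2 * halfHarmonic M ≤ 8 + 2 * Real.log s := by
  have hexp : (5 : ℝ) ≤ Real.exp 2 := by
    linarith [Real.quadratic_le_exp_of_nonneg (zero_le_two : (0 : ℝ) ≤ 2)]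
  have hlog : Real.log (2 * M + 1) ≤ 2 + Real.log s := by
    calc Real.log (2 * M + 1) ≤ Real.log (Real.exp 2 * s) :=
          Real.log_le_log (by positivity) (by nlinarith)
      _ = 2 + Real.log s := by
          rw [Real.log_mul (Real.exp_pos 2).ne' (by positivity), Real.log_exp]
  linarith [halfHarmonic_le M]

lemma mul_div_le_four_mul_mul_div {N C M X s L : ℝ} (hC : 0 ≤ C) (hX : 0 < X)
    (hs : 2 ≤ s) (hL : 4 ≤ L) (hNX : N * X ≤ 2 * s ^ 2) (hCL : C ≤ 8 + L)
    (hM : 2 * s - 1 ≤ M) :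
    N * C / M ≤ 4 * s * L / X := by
  rw [div_le_div_iff₀ (by linarith) hX]
  have hkey : 2 * s ^ 2 * (8 + L) ≤ 4 * s * L * (2 * s - 1) := by
    nlinarith [mul_nonneg (by linarith : (0 : ℝ) ≤ s - 2) (by linarith : (0 : ℝ) ≤ 3 * L - 8)]
  calc N * C * X = N * X * C := by ring
    _ ≤ 2 * s ^ 2 * (8 + L) := mul_le_mul hNX hCL hC (by positivity)
    _ ≤ 4 * s * L * (2 * s - 1) := hkey
    _ ≤ 4 * s * L * M := by gcongr

theorem exists_well_spaced_point_general (n : ℕ) (hn : Real.exp 5 < (n : ℝ)) (k : ℕ)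
    (l : Nat.Partition n)
    (x : ℝ) (hx : (k : ℝ) * Real.sqrt n * Real.log n < |x|) :
    ∃ y : ℝ, |y - x| < Real.sqrt n ∧
      (((poleSet n l k).filter (fun p => |p - x| < |x| / 2)).map
        (fun p => 1 / |p - y|)).sum ≤ 4 * Real.sqrt n * Real.log n / |x| := by
  set s := Real.sqrt n
  set L := Real.log n
  have hn₀ : (0 : ℝ) < n := (Real.exp_pos 5).trans hn
  have hL : 5 < L := (Real.lt_log_iff_exp_lt hn₀).2 hn
  have hsL : L = 2 * Real.log s := by rw [Real.log_sqrt hn₀.le]; ring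
  have hs : 2 ≤ s := Real.le_sqrt_of_sq_le (by linarith [Real.add_one_le_exp 5])
  have hk : (k : ℝ) ≤ k * s * L := by
    rw [mul_assoc]
    exact le_mul_of_one_le_right (Nat.cast_nonneg k) (by nlinarith)
  have hx₀ : 0 < |x| := by linarith [(Nat.cast_nonneg k : (0 : ℝ) ≤ k)]
  set M := ⌈2 * s - 1⌉₊
  have hM₀ : 0 < M := Nat.ceil_pos.2 (by linarith)
  have hMs : (M : ℝ) < 2 * s := by linarith [Nat.ceil_lt_add_one (by linarith : 0 ≤ 2 * s - 1)]
  obtain ⟨y, hy, hsum⟩ := exists_abs_sub_lt_sum_one_div_abs_sub_le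
    (S := (poleSet n l k).filter fun p => |p - x| < |x| / 2) (θ := k / 2)
    (fun p hp => exists_eq_add_int_of_mem_poleSet l (Multiset.mem_filter.1 hp).1) x hM₀ hMs
  refine ⟨y, hy, hsum.trans (mul_div_le_four_mul_mul_div ?_ hx₀ hs
    (by linarith) ?_ (by linarith [two_mul_halfHarmonic_le (by linarith) hMs]) (Nat.le_ceil _))⟩
  · exact mul_nonneg zero_le_two (sum_nonneg fun j _ => by positivity)
  · have := card_filter_poleSet_mul_le l k (x := x) (by linarith)
    rw [Real.sq_sqrt hn₀.le]
    linarith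

/-- **Lemma (existence of well-spaced points).** Let `n > e⁵`, `1 < k < √n`, `λ ⊢ n`, and let
`𝒫` be the multiset `{a_j − k/2} ∪ {k/2 − b_j}`. Then for every real `x` with
`|x| > k·√n·log n` there is a real `y` with `|y − x| < √n` such that
`∑_{p ∈ 𝒫, |p−x| < |x|/2} 1/|p − y| ≤ 4·√n·(log n)/|x|`,
i.e. `y` is `4√n·log n`-well-spaced for `x` with respect to `𝒫`. -/
theorem exists_well_spaced_point (n : ℕ) (hn : Real.exp 5 < (n : ℝ)) (k : ℕ)
    (hk1 : 1 < k) (hk2 : (k : ℝ) < Real.sqrt n) (l : Nat.Partition n)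
    (x : ℝ) (hx : (k : ℝ) * Real.sqrt n * Real.log n < |x|) :
    ∃ y : ℝ, |y - x| < Real.sqrt n ∧
      (((poleSet n l k).filter (fun p => |p - x| < |x| / 2)).map
        (fun p => 1 / |p - y|)).sum ≤ 4 * Real.sqrt n * Real.log n / |x| :=
  exists_well_spaced_point_general n hn k l x hx
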